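/- arXiv:1811.05570 — 5 statements merged into one kernel-verified Lean document; each statement's English description precedes it below -/
import Mathlib

section
/- Let β : V × V → W be a symmetric bilinear map into an inner product space W (positive definite) that is flat, i.e. ⟨β(W,X),β(Y,Z)⟩ = ⟨β(Y,X),β(W,Z)⟩ for all vectors. Then dim N(β) ≥ dim V − dim S(β), where N(β) = {X ∈ V : β(X,Y) = 0 for all Y} is the nullity and S(β) = span{β(X,Y) : X,Y ∈ V} is the span of β. -/
open scoped RealInnerProductSpace

/-- Moore's Corollary 1: for a flat symmetric bilinear map `β` into a
positive definite inner product space, `dim N(β) ≥ dim V - dim S(β)`, where `N(β)` is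
the nullity and `S(β)` the span of the image of `β`. -/
theorem finrank_nullity_ge_of_flat
    {V W : Type*} [AddCommGroup V] [Module ℝ V] [FiniteDimensional ℝ V]
    [NormedAddCommGroup W] [InnerProductSpace ℝ W] [FiniteDimensional ℝ W]
    (β : V →ₗ[ℝ] V →ₗ[ℝ] W) (hβsymm : ∀ x y : V, β x y = β y x)
    (hflat : ∀ w x y z : V, ⟪β w x, β y z⟫ = ⟪β y x, β w z⟫) :
    Module.finrank ℝ V
        - Module.finrank ℝ ↥(Submodule.span ℝ {w : W | ∃ x y : V, β x y = w})
      ≤ Module.finrank ℝ ↥(⨅ y : V, LinearMap.ker (β.flip y)) := by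
  classical
  -- choose `e` maximizing the rank of `β e`
  obtain ⟨e, hemax⟩ : ∃ e : V, ∀ e' : V,
      Module.finrank ℝ ↥(LinearMap.range (β e')) ≤ Module.finrank ℝ ↥(LinearMap.range (β e)) := by
    have hne : (Set.range fun e : V => Module.finrank ℝ ↥(LinearMap.range (β e))).Nonempty :=
      ⟨_, ⟨0, rfl⟩⟩
    have hbd : BddAbove (Set.range fun e : V => Module.finrank ℝ ↥(LinearMap.range (β e))) :=
      ⟨Module.finrank ℝ W, by rintro n ⟨e, rfl⟩; exact Submodule.finrank_le _⟩
    obtain ⟨e, he⟩ := Nat.sSup_mem hne hbd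
    refine ⟨e, fun e' => ?_⟩
    have h1 : Module.finrank ℝ ↥(LinearMap.range (β e'))
        ≤ sSup (Set.range fun e : V => Module.finrank ℝ ↥(LinearMap.range (β e))) :=
      le_csSup hbd ⟨e', rfl⟩
    exact h1.trans_eq he.symm
  -- Lemma A: if `β e X = 0` then `β X Y ⟂ β e Z` for all `Y Z`.
  have lemA : ∀ X : V, β e X = 0 → ∀ Y Z : V, ⟪β X Y, β e Z⟫ = 0 := by
    intro X hX Y Z
    calc ⟪β X Y, β e Z⟫ = ⟪β e Y, β X Z⟫ := hflat X Y e Z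
      _ = ⟪β e Y, β Z X⟫ := by rw [hβsymm X Z]
      _ = ⟪β Z Y, β e X⟫ := hflat e Y Z X
      _ = 0 := by rw [hX, inner_zero_right]
  -- key: ker (β e) ⊆ N(β)
  have hker : LinearMap.ker (β e) ≤ ⨅ y : V, LinearMap.ker (β.flip y) := by
    intro X hX
    have hX' : β e X = 0 := hX
    -- first: ker (β (e + X)) = ker (β e) ⊓ ker (β X)
    have hkereq : LinearMap.ker (β (e + X)) = LinearMap.ker (β e) ⊓ LinearMap.ker (β X) := by
      ext Z
      simp only [LinearMap.mem_ker, Submodule.mem_inf, map_add, LinearMap.add_apply]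
      constructor
      · intro h
        have h1 : β e Z = -(β X Z) := by linear_combination (norm := module) h
        have h2 : ⟪β e Z, β e Z⟫ = 0 := by
          calc ⟪β e Z, β e Z⟫ = ⟪β e Z, -(β X Z)⟫ := by rw [← h1]
            _ = -⟪β e Z, β X Z⟫ := by rw [inner_neg_right]
            _ = -⟪β X Z, β e Z⟫ := by rw [real_inner_comm]
            _ = 0 := by rw [lemA X hX' Z Z, neg_zero]
        have h3 : β e Z = 0 := by
          have := inner_self_eq_zero (𝕜 := ℝ).mp h2
          exact this
        exact ⟨h3, by rw [h3, zero_add] at h; exact h⟩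
      · rintro ⟨h1, h2⟩; rw [h1, h2, add_zero]
    -- maximality forces ker (β e) ≤ ker (β X)
    have hrank : Module.finrank ℝ ↥(LinearMap.range (β (e + X)))
        ≤ Module.finrank ℝ ↥(LinearMap.range (β e)) := hemax (e + X)
    have hrn1 := LinearMap.finrank_range_add_finrank_ker (β (e + X))
    have hrn2 := LinearMap.finrank_range_add_finrank_ker (β e)
    have hkle : LinearMap.ker (β (e + X)) ≤ LinearMap.ker (β e) := by
      rw [hkereq]; exact inf_le_left
    have hfle : Module.finrank ℝ ↥(LinearMap.ker (β e))
        ≤ Module.finrank ℝ ↥(LinearMap.ker (β (e + X))) := by omega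
    have heq : LinearMap.ker (β (e + X)) = LinearMap.ker (β e) :=
      Submodule.eq_of_le_of_finrank_le hkle hfle
    have hsub : LinearMap.ker (β e) ≤ LinearMap.ker (β X) := by
      rw [← heq, hkereq]; exact inf_le_right
    have hXX : β X X = 0 := hsub hX
    -- conclude β X Y = 0 for all Y
    have hXY : ∀ Y : V, β X Y = 0 := by
      intro Y
      have : ⟪β X Y, β X Y⟫ = 0 := by
        calc ⟪β X Y, β X Y⟫ = ⟪β X Y, β Y X⟫ := by rw [hβsymm X Y]
          _ = ⟪β Y Y, β X X⟫ := hflat X Y Y X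
          _ = 0 := by rw [hXX, inner_zero_right]
      exact inner_self_eq_zero (𝕜 := ℝ).mp this
    simp only [Submodule.mem_iInf, LinearMap.mem_ker, LinearMap.flip_apply]
    intro y
    exact hXY y
  -- dimension counting
  have hrn := LinearMap.finrank_range_add_finrank_ker (β e)
  have hrS : Module.finrank ℝ ↥(LinearMap.range (β e))
      ≤ Module.finrank ℝ ↥(Submodule.span ℝ {w : W | ∃ x y : V, β x y = w}) := by
    apply Submodule.finrank_mono
    rintro w ⟨y, rfl⟩
    exact Submodule.subset_span ⟨e, y, rfl⟩
  have hN : Module.finrank ℝ ↥(LinearMap.ker (β e))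
      ≤ Module.finrank ℝ ↥(⨅ y : V, LinearMap.ker (β.flip y)) :=
    Submodule.finrank_mono hker
  omega
end

section
/- Suppose β : V × V → W is a flat symmetric bilinear map into a positive definite inner product space, with trivial nullity N(β) = 0. Then dim S(β) ≥ dim V; in particular dim W ≥ dim V. -/
/-!
Choose `e` for which `y ↦ β y e` has maximal rank. A perturbation argument shows that if
`β x e = 0` then `β x y` lies in the image of `β · e` for every `y`: otherwise the image of
`β · (e + t • y)` would be strictly larger for a generic `t`. Flatness makes `β x y` orthogonal to
that image, so `β x = 0` and `x = 0`. Hence `β · e` is injective, and its image, of dimension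
`dim V`, lies in `S(β)`.
-/

open Module

theorem Module.End.exists_ne_zero_injective_one_add_smul {K E : Type*} [Field K] [Infinite K]
    [AddCommGroup E] [Module K E] [FiniteDimensional K E] (Φ : Module.End K E) :
    ∃ t : K, t ≠ 0 ∧ Function.Injective ⇑((1 : Module.End K E) + t • Φ) := by
  obtain ⟨μ, hμ⟩ := (Φ.finite_hasEigenvalue.union (Set.finite_singleton 0)).exists_notMem
  simp only [Set.mem_union, Set.mem_ofPred_eq, Set.mem_singleton_iff, not_or] at hμ
  obtain ⟨hμΦ, hμ0⟩ := hμ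
  refine ⟨-μ⁻¹, by simpa using hμ0, ?_⟩
  rw [← LinearMap.ker_eq_bot, LinearMap.ker_eq_bot']
  intro x hx
  by_contra hx0
  refine hμΦ (hasEigenvalue_of_hasEigenvector ⟨mem_eigenspace_iff.2 ?_, hx0⟩)
  have hΦx : Φ x = μ • (μ⁻¹ • Φ x) := by rw [smul_smul, mul_inv_cancel₀ hμ0, one_smul]
  rw [neg_smul, ← sub_eq_add_neg, LinearMap.sub_apply, sub_eq_zero, Module.End.one_apply] at hx
  rw [hΦx, ← LinearMap.smul_apply, ← hx]

theorem LinearMap.exists_ne_zero_injective_add_smul {K U W : Type*} [Field K] [Infinite K]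
    [AddCommGroup U] [Module K U] [FiniteDimensional K U] [AddCommGroup W] [Module K W]
    {g : U →ₗ[K] W} (hg : Function.Injective g) (h : U →ₗ[K] W) :
    ∃ t : K, t ≠ 0 ∧ Function.Injective (g + t • h) := by
  obtain ⟨L, hL⟩ := g.exists_leftInverse_of_injective (ker_eq_bot.2 hg)
  obtain ⟨t, ht, hinj⟩ := Module.End.exists_ne_zero_injective_one_add_smul (L ∘ₗ h)
  have hcomp : L ∘ₗ (g + t • h) = 1 + t • (L ∘ₗ h) := by
    rw [comp_add, comp_smul, hL]; rfl
  exact ⟨t, ht, Function.Injective.of_comp (f := L) (by rw [← coe_comp, hcomp]; exact hinj)⟩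

theorem LinearMap.apply_mem_range_of_finrank_range_add_smul_le {K U W : Type*} [Field K]
    [Infinite K] [AddCommGroup U] [Module K U] [FiniteDimensional K U] [AddCommGroup W]
    [Module K W] {A B : U →ₗ[K] W}
    (hA : ∀ t : K, finrank K (range (A + t • B)) ≤ finrank K (range A)) {x : U} (hx : A x = 0) :
    B x ∈ range A := by
  -- Otherwise `(c, s) ↦ A c + s • B x` on `C × K`, with `C` a complement of `ker A`, is injective
  -- and stays so after a generic perturbation by `t • B`, raising the rank of `A + t • B`.
  by_contra hBx
  have hBx0 : B x ≠ 0 := fun h => hBx (h ▸ (range A).zero_mem)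
  obtain ⟨C, hC⟩ := (ker A).exists_isCompl
  have hAC : Function.Injective (A.domRestrict C) := by
    rw [← ker_eq_bot, ker_eq_bot']
    exact fun c hc => Subtype.ext (Submodule.disjoint_def.1 hC.disjoint c hc c.2)
  have hg : Function.Injective ((A.domRestrict C).coprod (toSpanSingleton K W (B x))) := by
    have hdisj : Disjoint (range (A.domRestrict C)) (range (toSpanSingleton K W (B x))) := by
      rw [range_toSpanSingleton, Submodule.disjoint_span_singleton' hBx0]
      exact fun h => hBx (range_domRestrict_le_range A C h)
    rw [← ker_eq_bot, ker_coprod_of_disjoint_range _ _ hdisj, ker_eq_bot.2 hAC,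
      ker_toSpanSingleton K hBx0, Submodule.prod_bot]
  obtain ⟨t, ht, hinj⟩ := exists_ne_zero_injective_add_smul hg ((B.domRestrict C).coprod 0)
  have hgt : (A.domRestrict C).coprod (toSpanSingleton K W (B x)) + t • (B.domRestrict C).coprod 0
      = ((A + t • B).domRestrict C).coprod (toSpanSingleton K W (B x)) := by
    ext <;> simp
  have hle : range (((A + t • B).domRestrict C).coprod (toSpanSingleton K W (B x)))
      ≤ range (A + t • B) := by
    rw [range_coprod, range_toSpanSingleton]
    refine sup_le (range_domRestrict_le_range _ _) ((Submodule.span_singleton_le_iff_mem _ _).2 ?_)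
    exact ⟨t⁻¹ • x, by simp [hx, ht]⟩
  have hCrank : finrank K C = finrank K (range A) := by
    have := Submodule.finrank_add_eq_of_isCompl hC
    have := finrank_range_add_finrank_ker A
    omega
  have := Submodule.finrank_mono hle
  rw [← hgt, finrank_range_of_inj hinj, finrank_prod, finrank_self, hCrank] at this
  exact absurd (this.trans (hA t)) (by omega)

theorem exists_forall_finrank_range_le {K ι U W : Type*} [Field K] [AddCommGroup U] [Module K U]
    [FiniteDimensional K U] [AddCommGroup W] [Module K W] [Nonempty ι] (F : ι → U →ₗ[K] W) :
    ∃ e, ∀ v, finrank K (LinearMap.range (F v)) ≤ finrank K (LinearMap.range (F e)) := by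
  have hbdd : BddAbove (Set.range fun v => finrank K (LinearMap.range (F v))) :=
    ⟨finrank K U, by rintro _ ⟨v, rfl⟩; exact LinearMap.finrank_range_le _⟩
  obtain ⟨e, he⟩ := Nat.sSup_mem (Set.range_nonempty _) hbdd
  exact ⟨e, fun v => (le_csSup hbdd ⟨v, rfl⟩).trans_eq he.symm⟩

open scoped RealInnerProductSpace

theorem finrank_le_of_flat_trivial_nullity_general
    {V W : Type*} [AddCommGroup V] [Module ℝ V] [FiniteDimensional ℝ V]
    [NormedAddCommGroup W] [InnerProductSpace ℝ W] [FiniteDimensional ℝ W]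
    (β : V →ₗ[ℝ] V →ₗ[ℝ] W)
    (hflat : ∀ w x y z : V, ⟪β w x, β y z⟫ = ⟪β y x, β w z⟫)
    (hnull : ∀ x : V, (∀ y : V, β x y = 0) → x = 0) :
    Module.finrank ℝ V ≤ Module.finrank ℝ ↥(Submodule.span ℝ {w : W | ∃ x y : V, β x y = w})
      ∧ Module.finrank ℝ V ≤ Module.finrank ℝ W := by
  obtain ⟨e, he⟩ := exists_forall_finrank_range_le β.flip
  have hinj : Function.Injective (β.flip e) := by
    refine LinearMap.ker_eq_bot.1 (LinearMap.ker_eq_bot'.2 fun x hx => hnull x fun y => ?_)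
    have hmem : β x y ∈ LinearMap.range (β.flip e) :=
      LinearMap.apply_mem_range_of_finrank_range_add_smul_le (B := β.flip y)
        (fun t => by rw [← map_smul, ← map_add]; exact he _) hx
    obtain ⟨z, hz⟩ := hmem
    have hperp : ⟪β x y, β z e⟫ = 0 := by
      rw [hflat, show β x e = 0 from hx, inner_zero_right]
    rw [← hz] at hperp ⊢
    exact inner_self_eq_zero.1 hperp
  have hrank : finrank ℝ V = finrank ℝ (LinearMap.range (β.flip e)) :=
    (LinearMap.finrank_range_of_inj hinj).symm
  have hS : LinearMap.range (β.flip e) ≤ Submodule.span ℝ {w : W | ∃ x y : V, β x y = w} := by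
    rintro _ ⟨z, rfl⟩
    exact Submodule.subset_span ⟨z, e, rfl⟩
  exact ⟨hrank.trans_le (Submodule.finrank_mono hS), hrank.trans_le (Submodule.finrank_le _)⟩

/-- a flat symmetric bilinear map `β` into a positive definite inner product
space with trivial nullity satisfies `dim S(β) ≥ dim V`; in particular `dim W ≥ dim V`. -/
theorem finrank_le_of_flat_trivial_nullity
    {V W : Type*} [AddCommGroup V] [Module ℝ V] [FiniteDimensional ℝ V]
    [NormedAddCommGroup W] [InnerProductSpace ℝ W] [FiniteDimensional ℝ W]
    (β : V →ₗ[ℝ] V →ₗ[ℝ] W) (hβsymm : ∀ x y : V, β x y = β y x)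
    (hflat : ∀ w x y z : V, ⟪β w x, β y z⟫ = ⟪β y x, β w z⟫)
    (hnull : ∀ x : V, (∀ y : V, β x y = 0) → x = 0) :
    Module.finrank ℝ V ≤ Module.finrank ℝ ↥(Submodule.span ℝ {w : W | ∃ x y : V, β x y = w})
      ∧ Module.finrank ℝ V ≤ Module.finrank ℝ W :=
  finrank_le_of_flat_trivial_nullity_general β hflat hnull
end

section
/- Let M₀ and M₁ be Riemannian manifolds of constant sectional curvatures c and −c respectively (c ∈ ℝ). Then the Riemannian product M₀ × M₁ is conformally flat (its Weyl tensor vanishes, assuming the total dimension is at least 4). -/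
open scoped RealInnerProductSpace

noncomputable section

variable {V₀ V₁ : Type*} [NormedAddCommGroup V₀] [InnerProductSpace ℝ V₀]
  [NormedAddCommGroup V₁] [InnerProductSpace ℝ V₁]

/-- The product metric on the tangent space `V₀ × V₁`. -/
def prodMetric (X Y : V₀ × V₁) : ℝ := ⟪X.1, Y.1⟫ + ⟪X.2, Y.2⟫

/-- The curvature tensor (at a point) of a Riemannian product of a manifold of constant
sectional curvature `c` and one of constant sectional curvature `-c`. -/
def prodCurv (c : ℝ) (X Y Z T : V₀ × V₁) : ℝ :=
  c * (⟪X.1, Z.1⟫ * ⟪Y.1, T.1⟫ - ⟪X.1, T.1⟫ * ⟪Y.1, Z.1⟫)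
    - c * (⟪X.2, Z.2⟫ * ⟪Y.2, T.2⟫ - ⟪X.2, T.2⟫ * ⟪Y.2, Z.2⟫)

/-- The Ricci tensor of `prodCurv`, computed with orthonormal bases of the factors. -/
def prodRic {n₀ n₁ : ℕ} (c : ℝ) (b₀ : OrthonormalBasis (Fin n₀) ℝ V₀)
    (b₁ : OrthonormalBasis (Fin n₁) ℝ V₁) (X Y : V₀ × V₁) : ℝ :=
  (∑ i : Fin n₀, prodCurv c ((b₀ i, 0) : V₀ × V₁) X ((b₀ i, 0) : V₀ × V₁) Y)
    + ∑ j : Fin n₁, prodCurv c ((0, b₁ j) : V₀ × V₁) X ((0, b₁ j) : V₀ × V₁) Y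

/-- The scalar curvature of `prodCurv`. -/
def prodScal {n₀ n₁ : ℕ} (c : ℝ) (b₀ : OrthonormalBasis (Fin n₀) ℝ V₀)
    (b₁ : OrthonormalBasis (Fin n₁) ℝ V₁) : ℝ :=
  (∑ i : Fin n₀, prodRic c b₀ b₁ ((b₀ i, 0) : V₀ × V₁) ((b₀ i, 0) : V₀ × V₁))
    + ∑ j : Fin n₁, prodRic c b₀ b₁ ((0, b₁ j) : V₀ × V₁) ((0, b₁ j) : V₀ × V₁)

/-- The Weyl conformal curvature tensor of `prodCurv`. -/
def prodWeyl {n₀ n₁ : ℕ} (c : ℝ) (b₀ : OrthonormalBasis (Fin n₀) ℝ V₀)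
    (b₁ : OrthonormalBasis (Fin n₁) ℝ V₁) (X Y Z T : V₀ × V₁) : ℝ :=
  prodCurv c X Y Z T
    - (1 / (((n₀ + n₁ : ℕ) : ℝ) - 2)) *
        (prodRic c b₀ b₁ X Z * prodMetric Y T - prodRic c b₀ b₁ X T * prodMetric Y Z
          + prodRic c b₀ b₁ Y T * prodMetric X Z - prodRic c b₀ b₁ Y Z * prodMetric X T)
    + (prodScal c b₀ b₁ / ((((n₀ + n₁ : ℕ) : ℝ) - 1) * (((n₀ + n₁ : ℕ) : ℝ) - 2))) *
        (prodMetric X Z * prodMetric Y T - prodMetric X T * prodMetric Y Z)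

lemma aux_sum_inner {n : ℕ} {V : Type*} [NormedAddCommGroup V] [InnerProductSpace ℝ V]
    (b : OrthonormalBasis (Fin n) ℝ V) (x y : V) :
    ∑ i, ⟪b i, x⟫ * ⟪b i, y⟫ = ⟪x, y⟫ := by
  simpa [real_inner_comm] using b.sum_inner_mul_inner x y

lemma aux_inner_self {n : ℕ} {V : Type*} [NormedAddCommGroup V] [InnerProductSpace ℝ V]
    (b : OrthonormalBasis (Fin n) ℝ V) (i : Fin n) : ⟪b i, b i⟫ = (1:ℝ) := by
  simp [b.orthonormal.1 i, real_inner_self_eq_norm_sq]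

lemma aux_sum2 {n : ℕ} {V : Type*} [NormedAddCommGroup V] [InnerProductSpace ℝ V]
    (b : OrthonormalBasis (Fin n) ℝ V) (x y : V) :
    ∑ i, ⟪b i, y⟫ * ⟪x, b i⟫ = ⟪x, y⟫ := by
  have h : ∀ i, ⟪b i, y⟫ * ⟪x, b i⟫ = ⟪y, b i⟫ * ⟪b i, x⟫ := fun i => by
    rw [real_inner_comm x, real_inner_comm y, mul_comm]
  rw [Finset.sum_congr rfl fun i _ => h i, b.sum_inner_mul_inner y x, real_inner_comm]

lemma prodRic_eq {n₀ n₁ : ℕ} (c : ℝ) (b₀ : OrthonormalBasis (Fin n₀) ℝ V₀)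
    (b₁ : OrthonormalBasis (Fin n₁) ℝ V₁) (X Y : V₀ × V₁) :
    prodRic c b₀ b₁ X Y
      = c * (((n₀ : ℝ) - 1) * ⟪X.1, Y.1⟫ - ((n₁ : ℝ) - 1) * ⟪X.2, Y.2⟫) := by
  unfold prodRic prodCurv
  simp only [aux_inner_self, inner_zero_left, inner_zero_right, mul_zero, zero_mul,
    sub_zero, zero_sub, mul_neg, one_mul]
  simp only [mul_sub, mul_assoc, Finset.sum_sub_distrib, Finset.sum_add_distrib,
    Finset.sum_neg_distrib, ← Finset.mul_sum, aux_sum2,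
    Finset.sum_const, Finset.card_univ, Fintype.card_fin, nsmul_eq_mul]
  ring

lemma prodScal_eq {n₀ n₁ : ℕ} (c : ℝ) (b₀ : OrthonormalBasis (Fin n₀) ℝ V₀)
    (b₁ : OrthonormalBasis (Fin n₁) ℝ V₁) :
    prodScal c b₀ b₁ = c * ((n₀ : ℝ) * ((n₀ : ℝ) - 1) - (n₁ : ℝ) * ((n₁ : ℝ) - 1)) := by
  unfold prodScal
  simp only [prodRic_eq, aux_inner_self, inner_zero_left, inner_zero_right, mul_zero, mul_one,
    sub_zero, zero_sub, Finset.sum_const, Finset.card_univ, Fintype.card_fin, nsmul_eq_mul]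
  ring

/-- the Riemannian product of a manifold of constant curvature `c` and a
manifold of constant curvature `-c` (total dimension at least 4) is conformally flat:
the Weyl tensor of the product metric vanishes identically (formalized pointwise, on
the tangent space `V₀ × V₁` with the product curvature tensor). -/
theorem prodWeyl_eq_zero {n₀ n₁ : ℕ} (hn : 4 ≤ n₀ + n₁)
    (c : ℝ) (b₀ : OrthonormalBasis (Fin n₀) ℝ V₀) (b₁ : OrthonormalBasis (Fin n₁) ℝ V₁) :
    ∀ X Y Z T : V₀ × V₁, prodWeyl c b₀ b₁ X Y Z T = 0 := by
  intro X Y Z T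
  have h4 : (4 : ℝ) ≤ (n₀ : ℝ) + (n₁ : ℝ) := by exact_mod_cast hn
  unfold prodWeyl prodMetric prodCurv
  rw [prodScal_eq]
  simp only [prodRic_eq]
  push_cast
  have h2 : (n₀ : ℝ) + (n₁ : ℝ) - 2 ≠ 0 := by linarith
  have h1 : (n₀ : ℝ) + (n₁ : ℝ) - 1 ≠ 0 := by linarith
  field_simp
  ring

end
end

section
/- Let f : M → ℝ^{n+p} be a conformal immersion with conformal factor φ > 0, and let F = φ^{-1} (Ψ ∘ f) be its light-cone representative, where Ψ : ℝ^{n+p} → 𝔼^{n+p} ⊂ 𝕍^{n+p+1} ⊂ 𝕃^{n+p+2} is the isometry onto the Euclidean slice of the light cone. Then F is an isometric immersion into 𝕃^{n+p+2} with respect to the original metric on M: ⟨dF(X), dF(Y)⟩ = ⟨X,Y⟩_M for all tangent vectors X, Y. -/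
open scoped RealInnerProductSpace

/-! `Ψ` takes values in the light cone, and `dΨ_y` is an isometry whose image is orthogonal to
`Ψ y`. Hence `G = Ψ ∘ f` satisfies `⟨G, G⟩ = 0` and `⟨G, dG⟩ = 0`, so in
`dF = φ⁻¹ dG + d(φ⁻¹) G` every term containing `G` drops out of the Minkowski product, leaving
`φ⁻² ⟨dG, dG⟩ = φ⁻² ⟨df, df⟩ = gM`. -/

/-- The Lorentzian inner product of signature `(m+1, 1)` on `𝕃^{m+2} = ℝ^{m+2}`. -/
def minkowski (m : ℕ) (x y : Fin (m + 2) → ℝ) : ℝ :=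
  (∑ i : Fin (m + 1), x i.castSucc * y i.castSucc)
    - x (Fin.last (m + 1)) * y (Fin.last (m + 1))

def minkowskiForm (m : ℕ) : LinearMap.BilinForm ℝ (Fin (m + 2) → ℝ) :=
  LinearMap.mk₂ ℝ (minkowski m)
    (fun x y z => by simp only [minkowski, Pi.add_apply, add_mul, Finset.sum_add_distrib]; ring)
    (fun c x y => by
      simp only [minkowski, Pi.smul_apply, smul_eq_mul, mul_sub, Finset.mul_sum, mul_assoc])
    (fun x y z => by simp only [minkowski, Pi.add_apply, mul_add, Finset.sum_add_distrib]; ring)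
    (fun c x y => by
      simp only [minkowski, Pi.smul_apply, smul_eq_mul, mul_sub, Finset.mul_sum, mul_left_comm])

@[simp]
theorem minkowskiForm_apply (m : ℕ) (x y : Fin (m + 2) → ℝ) :
    minkowskiForm m x y = minkowski m x y := rfl

theorem isSymm_minkowskiForm (m : ℕ) : (minkowskiForm m).IsSymm :=
  LinearMap.BilinForm.isSymm_def.2 fun x y => by
    simp only [minkowskiForm_apply, minkowski, mul_comm]

section LightCone

variable {H V : Type*} [NormedAddCommGroup H] [InnerProductSpace ℝ H]

noncomputable def lightconeLift [AddCommGroup V] [Module ℝ V] (x₀ w : V) (A : H →ₗ[ℝ] V)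
    (y : H) : V :=
  x₀ + A y - ((1 / 2 : ℝ) * ‖y‖ ^ 2) • w

theorem hasFDerivAt_lightconeLift [NormedAddCommGroup V] [NormedSpace ℝ V] (x₀ w : V)
    (A : H →L[ℝ] V) (y : H) :
    HasFDerivAt (lightconeLift x₀ w (A : H →ₗ[ℝ] V)) (A - (innerSL ℝ y).smulRight w) y := by
  have h := ((hasFDerivAt_const x₀ y).add A.hasFDerivAt).sub
    (((hasStrictFDerivAt_norm_sq y).hasFDerivAt.const_mul (1 / 2 : ℝ)).smul_const w)
  convert h using 1
  · rfl
  · ext z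
    simp

variable [AddCommGroup V] [Module ℝ V] {B : LinearMap.BilinForm ℝ V} {x₀ w : V} {A : H →ₗ[ℝ] V}

theorem lightconeLift_isNull (hB : B.IsSymm) (hw : B w w = 0) (hx₀ : B x₀ x₀ = 0)
    (hx₀w : B x₀ w = 1) (hA : ∀ u v, B (A u) (A v) = ⟪u, v⟫) (hAx₀ : ∀ u, B (A u) x₀ = 0)
    (hAw : ∀ u, B (A u) w = 0) (y : H) :
    B (lightconeLift x₀ w A y) (lightconeLift x₀ w A y) = 0 := by
  simp only [lightconeLift, map_add, map_sub, map_smul, LinearMap.add_apply, LinearMap.sub_apply,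
    LinearMap.smul_apply, smul_eq_mul, hw, hx₀, hx₀w, hA, hAx₀, hAw, hB.eq w x₀, hB.eq x₀ (A _),
    hB.eq w (A _), real_inner_self_eq_norm_sq]
  ring

theorem lightconeLift_orthogonal_tangent (hB : B.IsSymm) (hw : B w w = 0) (hx₀w : B x₀ w = 1)
    (hA : ∀ u v, B (A u) (A v) = ⟪u, v⟫) (hAx₀ : ∀ u, B (A u) x₀ = 0)
    (hAw : ∀ u, B (A u) w = 0) (y h : H) :
    B (lightconeLift x₀ w A y) (A h - ⟪y, h⟫ • w) = 0 := by
  simp only [lightconeLift, map_add, map_sub, map_smul, LinearMap.add_apply, LinearMap.sub_apply,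
    LinearMap.smul_apply, smul_eq_mul, hw, hx₀w, hA, hAx₀, hAw, hB.eq x₀ (A _), hB.eq w (A _)]
  ring

theorem lightconeLift_tangent_isometry (hB : B.IsSymm) (hw : B w w = 0)
    (hA : ∀ u v, B (A u) (A v) = ⟪u, v⟫) (hAw : ∀ u, B (A u) w = 0) (y h k : H) :
    B (A h - ⟪y, h⟫ • w) (A k - ⟪y, k⟫ • w) = ⟪h, k⟫ := by
  simp only [map_sub, map_smul, LinearMap.sub_apply, LinearMap.smul_apply, smul_eq_mul, hw, hA,
    hAw, hB.eq w (A _)]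
  ring

end LightCone

theorem bilinForm_fderiv_smul_of_isNull {E V : Type*} [NormedAddCommGroup E] [NormedSpace ℝ E]
    [NormedAddCommGroup V] [NormedSpace ℝ V] {B : LinearMap.BilinForm ℝ V} (hB : B.IsSymm)
    {ψ : E → ℝ} {G : E → V} {G' : E →L[ℝ] V} {x : E} (hψ : DifferentiableAt ℝ ψ x)
    (hG : HasFDerivAt G G' x) (hnull : B (G x) (G x) = 0) (horth : ∀ u, B (G x) (G' u) = 0)
    (u v : E) :
    B (fderiv ℝ (fun z => ψ z • G z) x u) (fderiv ℝ (fun z => ψ z • G z) x v) =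
      ψ x ^ 2 * B (G' u) (G' v) := by
  rw [(hψ.hasFDerivAt.fun_smul hG).fderiv]
  simp only [add_apply, smul_apply, ContinuousLinearMap.smulRight_apply, map_add, map_smul,
    LinearMap.add_apply, LinearMap.smul_apply, smul_eq_mul, hnull, horth, hB.eq (G' _) (G x)]
  ring

/-- The manifold `M` is modelled by a single chart `E` carrying the metric `gM`. -/
theorem lightcone_representative_isometric_general
    {E : Type*} [NormedAddCommGroup E] [NormedSpace ℝ E] {n p : ℕ}
    (gM : E → E → E → ℝ)
    (f : E → EuclideanSpace ℝ (Fin (n + p))) (hf : Differentiable ℝ f)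
    (φ : E → ℝ) (hφ : Differentiable ℝ φ) (hφpos : ∀ x, 0 < φ x)
    (hconf : ∀ x u v, ⟪fderiv ℝ f x u, fderiv ℝ f x v⟫ = (φ x) ^ 2 * gM x u v)
    (w x₀ : Fin (n + p + 2) → ℝ)
    (hw : minkowski (n + p) w w = 0)
    (hx₀ : minkowski (n + p) x₀ x₀ = 0) (hx₀w : minkowski (n + p) x₀ w = 1)
    (A : EuclideanSpace ℝ (Fin (n + p)) →ₗ[ℝ] (Fin (n + p + 2) → ℝ))
    (hA : ∀ u v, minkowski (n + p) (A u) (A v) = ⟪u, v⟫)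
    (hAx₀ : ∀ u, minkowski (n + p) (A u) x₀ = 0)
    (hAw : ∀ u, minkowski (n + p) (A u) w = 0)
    (Ψ : EuclideanSpace ℝ (Fin (n + p)) → (Fin (n + p + 2) → ℝ))
    (hΨ : ∀ y, Ψ y = x₀ + A y - ((1 / 2 : ℝ) * ‖y‖ ^ 2) • w)
    (F : E → (Fin (n + p + 2) → ℝ)) (hF : ∀ x, F x = (φ x)⁻¹ • Ψ (f x)) :
    ∀ x u v, minkowski (n + p) (fderiv ℝ F x u) (fderiv ℝ F x v) = gM x u v := by
  intro x u v
  have hB := isSymm_minkowskiForm (n + p)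
  have hF' : F = fun z => (φ z)⁻¹ • lightconeLift x₀ w A (f z) := by
    ext1 z
    rw [hF, hΨ, lightconeLift]
  have hG : HasFDerivAt (fun z => lightconeLift x₀ w A (f z))
      ((A.toContinuousLinearMap - (innerSL ℝ (f x)).smulRight w).comp (fderiv ℝ f x)) x :=
    (hasFDerivAt_lightconeLift x₀ w A.toContinuousLinearMap (f x)).comp x (hf x).hasFDerivAt
  have hφx : φ x ≠ 0 := (hφpos x).ne'
  show minkowskiForm (n + p) _ _ = _
  rw [hF', bilinForm_fderiv_smul_of_isNull hB (ψ := fun z => (φ z)⁻¹) ((hφ x).inv hφx) hG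
    (lightconeLift_isNull hB hw hx₀ hx₀w hA hAx₀ hAw _)
    (fun _ => lightconeLift_orthogonal_tangent hB hw hx₀w hA hAx₀ hAw _ _)]
  simp only [ContinuousLinearMap.comp_apply, sub_apply, ContinuousLinearMap.smulRight_apply,
    LinearMap.coe_toContinuousLinearMap', innerSL_apply_apply]
  rw [lightconeLift_tangent_isometry hB hw hA hAw, hconf]
  field_simp

/-- if `f : M → ℝ^{n+p}` is a conformal immersion with conformal factor
`φ > 0` (formalized in a chart: `M` is an open domain `E` carrying the metric `gM`, and
`⟨df(X), df(Y)⟩ = φ² gM(X,Y)`), and `Ψ` is the isometric embedding of `ℝ^{n+p}` onto the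
Euclidean slice of the light cone of `𝕃^{n+p+2}`, then the light-cone representative
`F = φ⁻¹ (Ψ ∘ f)` is an isometric immersion with respect to the original metric:
`⟨dF(X), dF(Y)⟩ = gM(X,Y)`. -/
theorem lightcone_representative_isometric
    {E : Type*} [NormedAddCommGroup E] [NormedSpace ℝ E] {n p : ℕ}
    (gM : E → E → E → ℝ)
    (f : E → EuclideanSpace ℝ (Fin (n + p))) (hf : Differentiable ℝ f)
    (φ : E → ℝ) (hφ : Differentiable ℝ φ) (hφpos : ∀ x, 0 < φ x)
    (hconf : ∀ x u v, ⟪fderiv ℝ f x u, fderiv ℝ f x v⟫ = (φ x) ^ 2 * gM x u v)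
    (w x₀ : Fin (n + p + 2) → ℝ)
    (hw : minkowski (n + p) w w = 0) (hwne : w ≠ 0)
    (hx₀ : minkowski (n + p) x₀ x₀ = 0) (hx₀w : minkowski (n + p) x₀ w = 1)
    (A : EuclideanSpace ℝ (Fin (n + p)) →ₗ[ℝ] (Fin (n + p + 2) → ℝ))
    (hA : ∀ u v, minkowski (n + p) (A u) (A v) = ⟪u, v⟫)
    (hAx₀ : ∀ u, minkowski (n + p) (A u) x₀ = 0)
    (hAw : ∀ u, minkowski (n + p) (A u) w = 0)
    (Ψ : EuclideanSpace ℝ (Fin (n + p)) → (Fin (n + p + 2) → ℝ))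
    (hΨ : ∀ y, Ψ y = x₀ + A y - ((1 / 2 : ℝ) * ‖y‖ ^ 2) • w)
    (F : E → (Fin (n + p + 2) → ℝ)) (hF : ∀ x, F x = (φ x)⁻¹ • Ψ (f x)) :
    ∀ x u v, minkowski (n + p) (fderiv ℝ F x u) (fderiv ℝ F x v) = gM x u v :=
  lightcone_representative_isometric_general gM f hf φ hφ hφpos hconf w x₀ hw hx₀ hx₀w A hA hAx₀ hAw
    Ψ hΨ F hF
end

section
/- Let β : V × V → W^{p,1} be a flat symmetric bilinear form into a Lorentzian space, with N(β) = {0}, and suppose S(β) is degenerate with S(β) ∩ S(β)^⊥ = span{ν}, ν null. Suppose there is F ∈ W null with ⟨β(X,Y),F⟩ = −⟨X,Y⟩ and ⟨ν,F⟩ = −1. Then β' = β − ⟨·,·⟩ν is a flat bilinear form whose span S(β') is contained in span{ν,F}^⊥ and hence is positive definite (Riemannian). -/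
open scoped RealInnerProductSpace

/-! The null vector `ν` is orthogonal to every `β x y`, so subtracting multiples of `ν` changes
no value of `g` on the span of `β`: flatness passes to `β' = β - ⟪·,·⟫ ν`. The normalisations
`g (β x y) F = -⟪x, y⟫` and `g ν F = -1` make `β'` orthogonal to `ν` and `F`, hence to the timelike
vector `ν + F`, and in signature `(p, 1)` the orthogonal complement of a timelike vector is
positive definite by the reversed Cauchy–Schwarz inequality. -/

/-- Reversed Cauchy–Schwarz: `(s, a)` is spacelike in `E ⊕ ℝ` with the Lorentzian form
`⟪s, s⟫ - a ^ 2` whenever it is orthogonal to a timelike `(r, c)`. -/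
theorem sq_lt_inner_self_of_inner_eq_mul {E : Type*} [NormedAddCommGroup E] [InnerProductSpace ℝ E]
    {s r : E} {a c : ℝ} (hr : ⟪r, r⟫ < c ^ 2) (hsr : ⟪s, r⟫ = a * c) (hne : s ≠ 0 ∨ a ≠ 0) :
    a ^ 2 < ⟪s, s⟫ := by
  have hc : 0 < c ^ 2 := by nlinarith [real_inner_self_nonneg (x := r)]
  rcases eq_or_ne s 0 with rfl | hs
  · have hc0 : c ≠ 0 := by rintro rfl; simp at hc
    have ha : a = 0 := by simpa [hc0] using hsr.symm
    exact absurd ha (hne.resolve_left (· rfl))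
  · have hss : 0 < ⟪s, s⟫ := real_inner_self_pos.2 hs
    have hCS := real_inner_mul_inner_self_le s r
    rw [hsr] at hCS
    nlinarith [mul_lt_mul_of_pos_left hr hss]

namespace Module.Basis

variable {W : Type*} [AddCommGroup W] [Module ℝ W] {p : ℕ}

noncomputable def spatialPart (b : Basis (Fin (p + 1)) ℝ W) (v : W) : EuclideanSpace ℝ (Fin p) :=
  WithLp.toLp 2 fun i => b.repr v i.castSucc

theorem apply_eq_inner_spatialPart_sub {g : LinearMap.BilinForm ℝ W}
    (b : Basis (Fin (p + 1)) ℝ W)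
    (hb : ∀ i j, g (b i) (b j) = if i = j then (if (i : ℕ) = p then (-1 : ℝ) else 1) else 0)
    (v w : W) :
    g v w = ⟪b.spatialPart v, b.spatialPart w⟫ - b.repr v (Fin.last p) * b.repr w (Fin.last p) := by
  conv_lhs => rw [← b.sum_repr v, ← b.sum_repr w]
  simp only [map_sum, LinearMap.sum_apply, map_smul, LinearMap.smul_apply, smul_eq_mul, hb,
    mul_ite, mul_zero]
  rw [Fin.sum_univ_castSucc]
  simp [spatialPart, PiLp.inner_apply, (Fin.is_lt _).ne, sub_eq_add_neg, mul_comm]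

theorem pos_apply_self_of_apply_eq_zero_of_apply_self_neg {g : LinearMap.BilinForm ℝ W}
    (b : Basis (Fin (p + 1)) ℝ W)
    (hb : ∀ i j, g (b i) (b j) = if i = j then (if (i : ℕ) = p then (-1 : ℝ) else 1) else 0)
    {t u : W} (ht : g t t < 0) (hut : g u t = 0) (hu : u ≠ 0) : 0 < g u u := by
  rw [b.apply_eq_inner_spatialPart_sub hb] at ht hut ⊢
  have hne : b.spatialPart u ≠ 0 ∨ b.repr u (Fin.last p) ≠ 0 := by
    by_contra! ⟨hs, hl⟩
    refine hu (b.ext_elem fun i => Fin.lastCases (by simpa using hl) (fun j => ?_) i)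
    simpa [spatialPart] using congrArg (· j) hs
  have := sq_lt_inner_self_of_inner_eq_mul (c := b.repr t (Fin.last p))
    (by linarith [sq (b.repr t (Fin.last p))]) (by linarith) hne
  linarith [sq (b.repr u (Fin.last p))]

end Module.Basis

theorem LinearMap.BilinForm.apply_sub_smul_sub_smul {R M : Type*} [CommRing R] [AddCommGroup M]
    [Module R M] (B : LinearMap.BilinForm R M) {ν x y : M} (hx : B x ν = 0) (hy : B ν y = 0)
    (hν : B ν ν = 0) (r s : R) : B (x - r • ν) (y - s • ν) = B x y := by
  simp [hx, hy, hν]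

theorem shifted_form_flat_riemannian_span_general
    {V W : Type*} [NormedAddCommGroup V] [InnerProductSpace ℝ V]
    [AddCommGroup W] [Module ℝ W] {p : ℕ}
    (g : LinearMap.BilinForm ℝ W) (hgsymm : ∀ x y : W, g x y = g y x)
    (b : Module.Basis (Fin (p + 1)) ℝ W)
    (hb : ∀ i j, g (b i) (b j) =
      if i = j then (if (i : ℕ) = p then (-1 : ℝ) else 1) else 0)
    (β : V →ₗ[ℝ] V →ₗ[ℝ] W)
    (hflat : ∀ w x y z : V, g (β w x) (β y z) = g (β y x) (β w z))
    (ν F : W) (hν : g ν ν = 0) (hF : g F F = 0) (hνF : g ν F = -1)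
    (hdeg : (Submodule.span ℝ {w : W | ∃ x y : V, β x y = w})
        ⊓ g.orthogonal (Submodule.span ℝ {w : W | ∃ x y : V, β x y = w})
        = Submodule.span ℝ {ν})
    (hcompat : ∀ x y : V, g (β x y) F = -⟪x, y⟫) :
    (∀ w x y z : V,
        g (β w x - ⟪w, x⟫ • ν) (β y z - ⟪y, z⟫ • ν)
          = g (β y x - ⟪y, x⟫ • ν) (β w z - ⟪w, z⟫ • ν))
      ∧ (∀ u ∈ Submodule.span ℝ {w : W | ∃ x y : V, β x y - ⟪x, y⟫ • ν = w},
          g u ν = 0 ∧ g u F = 0)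
      ∧ ∀ u ∈ Submodule.span ℝ {w : W | ∃ x y : V, β x y - ⟪x, y⟫ • ν = w},
          u ≠ 0 → 0 < g u u := by
  have hνβ : ∀ x y, g (β x y) ν = 0 := by
    have hνS := (Submodule.mem_inf.1 (hdeg.ge (Submodule.mem_span_singleton_self ν))).2
    exact fun x y => LinearMap.BilinForm.mem_orthogonal_iff.1 hνS _
      (Submodule.subset_span ⟨x, y, rfl⟩)
  have hspan : Submodule.span ℝ {w : W | ∃ x y : V, β x y - ⟪x, y⟫ • ν = w}
      ≤ LinearMap.ker (g.flip ν) ⊓ LinearMap.ker (g.flip F) := by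
    rw [Submodule.span_le]
    rintro _ ⟨x, y, rfl⟩
    simp [hνβ, hν, hcompat, hνF]
  have hperp : ∀ u ∈ Submodule.span ℝ {w : W | ∃ x y : V, β x y - ⟪x, y⟫ • ν = w},
      g u ν = 0 ∧ g u F = 0 := fun u hu => hspan hu
  refine ⟨fun w x y z => ?_, hperp, fun u hu hu0 => ?_⟩
  · have hβν : ∀ x y, g ν (β x y) = 0 := fun x y => hgsymm _ _ ▸ hνβ x y
    rw [g.apply_sub_smul_sub_smul (hνβ w x) (hβν y z) hν,
      g.apply_sub_smul_sub_smul (hνβ y x) (hβν w z) hν]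
    exact hflat w x y z
  · refine b.pos_apply_self_of_apply_eq_zero_of_apply_self_neg hb (t := ν + F) ?_ ?_ hu0
    · simp [hν, hF, hνF, hgsymm F ν]
    · simp [(hperp u hu).1, (hperp u hu).2]

/-- let `β` be a flat symmetric bilinear form into a Lorentzian space
`W^{p,1}` (signature `(p,1)`, encoded by a basis in which the form is `diag(1,…,1,-1)`)
with trivial nullity, whose span `S(β)` is degenerate with `S(β) ∩ S(β)^⊥ = span{ν}`,
`ν` null, and suppose `F` is null with `⟨β(x,y), F⟩ = -⟨x,y⟩` and `⟨ν,F⟩ = -1`.  Then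
`β' = β - ⟨·,·⟩ν` is flat, its span `S(β')` is contained in `span{ν,F}^⊥`, and `S(β')`
is positive definite (Riemannian). -/
theorem shifted_form_flat_riemannian_span
    {V W : Type*} [NormedAddCommGroup V] [InnerProductSpace ℝ V] [FiniteDimensional ℝ V]
    [AddCommGroup W] [Module ℝ W] {p : ℕ}
    (g : LinearMap.BilinForm ℝ W) (hgsymm : ∀ x y : W, g x y = g y x)
    (b : Module.Basis (Fin (p + 1)) ℝ W)
    (hb : ∀ i j, g (b i) (b j) =
      if i = j then (if (i : ℕ) = p then (-1 : ℝ) else 1) else 0)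
    (β : V →ₗ[ℝ] V →ₗ[ℝ] W) (hβsymm : ∀ x y : V, β x y = β y x)
    (hflat : ∀ w x y z : V, g (β w x) (β y z) = g (β y x) (β w z))
    (hnull : ∀ x : V, (∀ y : V, β x y = 0) → x = 0)
    (ν F : W) (hν : g ν ν = 0) (hF : g F F = 0) (hνF : g ν F = -1)
    (hdeg : (Submodule.span ℝ {w : W | ∃ x y : V, β x y = w})
        ⊓ g.orthogonal (Submodule.span ℝ {w : W | ∃ x y : V, β x y = w})
        = Submodule.span ℝ {ν})
    (hcompat : ∀ x y : V, g (β x y) F = -⟪x, y⟫) :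
    (∀ w x y z : V,
        g (β w x - ⟪w, x⟫ • ν) (β y z - ⟪y, z⟫ • ν)
          = g (β y x - ⟪y, x⟫ • ν) (β w z - ⟪w, z⟫ • ν))
      ∧ (∀ u ∈ Submodule.span ℝ {w : W | ∃ x y : V, β x y - ⟪x, y⟫ • ν = w},
          g u ν = 0 ∧ g u F = 0)
      ∧ ∀ u ∈ Submodule.span ℝ {w : W | ∃ x y : V, β x y - ⟪x, y⟫ • ν = w},
          u ≠ 0 → 0 < g u u :=
  shifted_form_flat_riemannian_span_general g hgsymm b hb β hflat ν F hν hF hνF hdeg hcompat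
end
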